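/- Let g and h be Lie algebras over a field k, and let ▷ : h × g → g be a bilinear left Lie-algebra action of h on g and ◁ : h × g → h a bilinear right Lie-algebra action of g on h. If the bracket [(ξ,η),(ξ',η')] := ([ξ,ξ'] + η▷ξ' − η'▷ξ, [η,η'] + η◁ξ' − η'◁ξ) on g × h satisfies the Jacobi identity, then the two matched-pair compatibility conditions hold: η▷[ξ,ξ'] = [η▷ξ,ξ'] + [ξ,η▷ξ'] + (η◁ξ)▷ξ' − (η◁ξ')▷ξ and [η,η']◁ξ = [η,η'◁ξ] + [η◁ξ,η'] + η◁(η'▷ξ) − η'◁(η▷ξ), for all ξ,ξ' ∈ g and η,η' ∈ h. -/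
import Mathlib


/-- The matched-pair bracket on the product vector space `G × H`:
`[(ξ,η),(ξ',η')] = ([ξ,ξ'] + η▷ξ' − η'▷ξ, [η,η'] + η◁ξ' − η'◁ξ)`. -/
def mpBracket {k G H : Type*} [Field k] [LieRing G] [LieAlgebra k G]
    [LieRing H] [LieAlgebra k H]
    (tr : H →ₗ[k] G →ₗ[k] G) (tl : H →ₗ[k] G →ₗ[k] H)
    (x y : G × H) : G × H :=
  (⁅x.1, y.1⁆ + tr x.2 y.1 - tr y.2 x.1, ⁅x.2, y.2⁆ + tl x.2 y.1 - tl y.2 x.1)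

/-- if `tr` is a left Lie-algebra action of `H` on `G` and `tl` is a
right Lie-algebra action of `G` on `H`, and the matched-pair bracket on `G × H`
satisfies the Jacobi identity, then the two matched-pair compatibility conditions
hold. -/
theorem jacobi_implies_matchedPair_compatibility
    {k G H : Type*} [Field k] [LieRing G] [LieAlgebra k G]
    [LieRing H] [LieAlgebra k H]
    (tr : H →ₗ[k] G →ₗ[k] G) (tl : H →ₗ[k] G →ₗ[k] H)
    (hleft : ∀ (η η' : H) (ξ : G), tr ⁅η, η'⁆ ξ = tr η (tr η' ξ) - tr η' (tr η ξ))
    (hright : ∀ (η : H) (ξ ξ' : G), tl η ⁅ξ, ξ'⁆ = tl (tl η ξ) ξ' - tl (tl η ξ') ξ)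
    (hjacobi : ∀ x y z : G × H,
      mpBracket tr tl x (mpBracket tr tl y z)
        + mpBracket tr tl y (mpBracket tr tl z x)
        + mpBracket tr tl z (mpBracket tr tl x y) = 0) :
    (∀ (η : H) (ξ ξ' : G),
      tr η ⁅ξ, ξ'⁆ = ⁅tr η ξ, ξ'⁆ + ⁅ξ, tr η ξ'⁆ + tr (tl η ξ) ξ' - tr (tl η ξ') ξ) ∧
    (∀ (η η' : H) (ξ : G),
      tl ⁅η, η'⁆ ξ = ⁅η, tl η' ξ⁆ + ⁅tl η ξ, η'⁆ + tl η (tr η' ξ) - tl η' (tr η ξ)) := by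
  constructor
  · intro η ξ ξ'
    have h := congrArg Prod.fst (hjacobi (ξ,0) (ξ',0) (0,η))
    simp [mpBracket] at h
    rw [← lie_skew ((tr η) ξ) ξ', ← lie_skew ξ ((tr η) ξ'), ← sub_eq_zero, ← h]
    abel
  · intro η η' ξ
    have h := congrArg Prod.snd (hjacobi (0,η) (0,η') (ξ,0))
    simp [mpBracket] at h
    rw [eq_comm, ← sub_eq_zero, ← h]
    abel
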